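/- arXiv:1404.5086 — 2 statements merged into one kernel-verified Lean document; each statement's English description precedes it below -/
import Mathlib

section
/- Under the same hypotheses (X = ⊕_i X_i, A X_i ⊆ X_i, g additive across the decomposition, U = Σ_i E_i with E_i = B⁻¹(X_i), minima attained), for each i ∈ I and x_i ∈ X_i the restricted DP recursion J̄_{i,T}(x_i) = g(x_i), J̄_{i,t}(x_i) = g(x_i) + min_{u∈E_i} J̄_{i,t+1}(A x_i + B u) satisfies J̄_{i,t}(x_i) = J_t*(x_i) for all t ≤ T, where J_t* is the cost-to-go of the full problem. -/
/-!
Restricting controls to `E_i` can only raise the cost, so `J_t* ≤ J̄_{i,t}` on `X_i`. Conversely,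
every control `u` of the full problem splits as `u = Σ_j u_j` with `u_j ∈ E_j`, and since the
projections `ρ_j` commute with `A`, the `j`-th component of the next state `A x + B u` is
`A (ρ_j x) + B u_j`. Together with the additivity of `g`, induction on the horizon gives
`Σ_j J̄_{j,t}(ρ_j x) ≤ J_t*(x)`; for `x ∈ X_i` only the `i`-th summand survives because
`J̄_{j,t}(0) = 0`.
-/

/-- Cost-to-go functions of the finite-horizon DP problem with controls restricted to
a set `S ⊆ U`, indexed by the number of steps to go: `JgoOn S 0 = g` and
`JgoOn S (k+1) x = g x + inf_{u ∈ S} JgoOn S k (A x + B u)`. -/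
noncomputable def JgoOn {F U X : Type*} [Field F] [AddCommGroup U] [Module F U]
    [AddCommGroup X] [Module F X]
    (g : X → ℝ) (A : X →ₗ[F] X) (B : U →ₗ[F] X) (S : Set U) : ℕ → X → ℝ
  | 0 => g
  | (k + 1) => fun x => g x + sInf ((fun u : U => JgoOn g A B S k (A x + B u)) '' S)

open Finset

section CostToGo

variable {F U X : Type*} [Field F] [AddCommGroup U] [Module F U] [AddCommGroup X] [Module F X]
  {g : X → ℝ} {A : X →ₗ[F] X} {B : U →ₗ[F] X}

theorem jgoOn_nonneg (hg : ∀ x, 0 ≤ g x) (S : Set U) : ∀ k x, 0 ≤ JgoOn g A B S k x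
  | 0, x => hg x
  | k + 1, x => add_nonneg (hg x) <| Real.sInf_nonneg <| by
      rintro _ ⟨u, -, rfl⟩
      exact jgoOn_nonneg hg S k _

theorem jgoOn_succ_le (hg : ∀ x, 0 ≤ g x) {S : Set U} {u : U} (hu : u ∈ S) (k : ℕ) (x : X) :
    JgoOn g A B S (k + 1) x ≤ g x + JgoOn g A B S k (A x + B u) := by
  have hbdd : BddBelow ((fun v : U => JgoOn g A B S k (A x + B v)) '' S) :=
    ⟨0, by rintro _ ⟨v, -, rfl⟩; exact jgoOn_nonneg hg S k _⟩
  exact add_le_add_right (csInf_le hbdd ⟨u, hu, rfl⟩) _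

theorem le_jgoOn_succ {S : Set U} (hS : S.Nonempty) {k : ℕ} {x : X} {c : ℝ}
    (h : ∀ u ∈ S, c ≤ g x + JgoOn g A B S k (A x + B u)) : c ≤ JgoOn g A B S (k + 1) x := by
  have : c - g x ≤ sInf ((fun u : U => JgoOn g A B S k (A x + B u)) '' S) := by
    refine le_csInf (hS.image _) ?_
    rintro _ ⟨u, hu, rfl⟩
    linarith [h u hu]
  change c ≤ g x + _
  linarith

theorem jgoOn_le_of_subset (hg : ∀ x, 0 ≤ g x) {S T : Set U} (hST : S ⊆ T) (hS : S.Nonempty) :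
    ∀ k x, JgoOn g A B T k x ≤ JgoOn g A B S k x
  | 0, _ => le_rfl
  | k + 1, x => le_jgoOn_succ hS fun _ hu =>
      (jgoOn_succ_le hg (hST hu) k x).trans <|
        add_le_add_right (jgoOn_le_of_subset hg hST hS k _) _

theorem jgoOn_zero_eq_zero (hg : ∀ x, 0 ≤ g x) (hg0 : g 0 = 0) {S : Set U} (hS : (0 : U) ∈ S) :
    ∀ k, JgoOn g A B S k 0 = 0
  | 0 => hg0
  | k + 1 => le_antisymm
      (by simpa [hg0, jgoOn_zero_eq_zero hg hg0 hS k] using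
        jgoOn_succ_le (A := A) (B := B) hg hS k 0)
      (jgoOn_nonneg hg S (k + 1) 0)

theorem sum_jgoOn_comp_le_jgoOn {ι : Type*} [Fintype ι] (hg : ∀ x, 0 ≤ g x) (ρ : ι → X → X)
    (hgadd : ∀ x, g x = ∑ i, g (ρ i x)) (S : ι → Set U)
    (hsplit : ∀ u, ∃ v : ι → U, (∀ i, v i ∈ S i) ∧ ∀ i x, ρ i (A x + B u) = A (ρ i x) + B (v i)) :
    ∀ k x, ∑ i, JgoOn g A B (S i) k (ρ i x) ≤ JgoOn g A B Set.univ k x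
  | 0, x => (hgadd x).ge
  | k + 1, x => le_jgoOn_succ Set.univ_nonempty fun u _ => by
      obtain ⟨v, hvS, hv⟩ := hsplit u
      calc ∑ i, JgoOn g A B (S i) (k + 1) (ρ i x)
          ≤ ∑ i, (g (ρ i x) + JgoOn g A B (S i) k (A (ρ i x) + B (v i))) :=
            sum_le_sum fun i _ => jgoOn_succ_le hg (hvS i) k _
        _ = g x + ∑ i, JgoOn g A B (S i) k (ρ i (A x + B u)) := by
            simp only [sum_add_distrib, hv, ← hgadd]
        _ ≤ g x + JgoOn g A B Set.univ k (A x + B u) :=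
            add_le_add_right (sum_jgoOn_comp_le_jgoOn hg ρ hgadd S hsplit k _) _

theorem sum_jgoOn_comp_eq_of_single {ι : Type*} [Fintype ι] [DecidableEq ι] (hg : ∀ x, 0 ≤ g x)
    (hg0 : g 0 = 0) {ρ : ι → X → X} {S : ι → Set U} (hS : ∀ j, (0 : U) ∈ S j) {i : ι} {x : X}
    (hρx : ∀ j, ρ j x = if j = i then x else 0) (k : ℕ) :
    ∑ j, JgoOn g A B (S j) k (ρ j x) = JgoOn g A B (S i) k x := by
  rw [Fintype.sum_eq_single i fun j hji => ?_, hρx i, if_pos rfl]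
  rw [hρx j, if_neg hji, jgoOn_zero_eq_zero hg hg0 (hS j)]

end CostToGo

theorem exists_sum_eq_of_iSup_eq_top {R M ι : Type*} [Semiring R] [AddCommMonoid M] [Module R M]
    [Fintype ι] {Es : ι → Submodule R M} (hE : (⊤ : Submodule R M) = ⨆ i, Es i) (u : M) :
    ∃ v : ι → M, (∀ i, v i ∈ Es i) ∧ ∑ i, v i = u := by
  obtain ⟨f, hf, rfl⟩ := (Submodule.mem_iSup_iff_exists_finsupp Es u).1 (hE ▸ trivial)
  exact ⟨f, hf, (Finsupp.sum_fintype f (fun _ m => m) fun _ => rfl).symm⟩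

section Decomposition

variable {R U X : Type*} [Semiring R] [AddCommMonoid U] [Module R U] [AddCommMonoid X]
  [Module R X] {ι : Type*} [Fintype ι] [DecidableEq ι] {Xs : ι → Submodule R X} {ρ : ι → X →ₗ[R] X}

theorem map_sum_eq_of_mem (hρproj : ∀ i j, ∀ x ∈ Xs j, ρ i x = if i = j then x else 0)
    {c : ι → X} (hc : ∀ j, c j ∈ Xs j) (i : ι) : ρ i (∑ j, c j) = c i := by
  simp [map_sum, hρproj _ _ _ (hc _)]

theorem map_comm_of_invariant {A : X →ₗ[R] X} (hA : ∀ i, ∀ x ∈ Xs i, A x ∈ Xs i)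
    (hρmem : ∀ i x, ρ i x ∈ Xs i) (hρsum : ∀ x, ∑ i, ρ i x = x)
    (hρproj : ∀ i j, ∀ x ∈ Xs j, ρ i x = if i = j then x else 0) (i : ι) (x : X) :
    ρ i (A x) = A (ρ i x) := by
  conv_lhs => rw [← hρsum x, map_sum]
  exact map_sum_eq_of_mem hρproj (fun j => hA j _ (hρmem j x)) i

theorem exists_split_control {A : X →ₗ[R] X} {B : U →ₗ[R] X}
    (hA : ∀ i, ∀ x ∈ Xs i, A x ∈ Xs i) (hρmem : ∀ i x, ρ i x ∈ Xs i)
    (hρsum : ∀ x, ∑ i, ρ i x = x) (hρproj : ∀ i j, ∀ x ∈ Xs j, ρ i x = if i = j then x else 0)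
    {Es : ι → Submodule R U} (hEs : ∀ i, Es i ≤ Submodule.comap B (Xs i))
    (hU : (⊤ : Submodule R U) = ⨆ i, Es i) (u : U) :
    ∃ v : ι → U, (∀ i, v i ∈ Es i) ∧ ∀ i x, ρ i (A x + B u) = A (ρ i x) + B (v i) := by
  obtain ⟨v, hvE, rfl⟩ := exists_sum_eq_of_iSup_eq_top hU u
  refine ⟨v, hvE, fun i x => ?_⟩
  have hvX : ∀ j, B (v j) ∈ Xs j := fun j => hEs j (hvE j)
  rw [map_add, map_comm_of_invariant hA hρmem hρsum hρproj, map_sum,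
    map_sum_eq_of_mem hρproj hvX]

end Decomposition

theorem restricted_costToGo_eq_costToGo_general
    {F U X : Type*} [Field F] [AddCommGroup U] [Module F U]
    [AddCommGroup X] [Module F X] {ι : Type*} [Fintype ι] [DecidableEq ι]
    (A : X →ₗ[F] X) (B : U →ₗ[F] X) (Xs : ι → Submodule F X)
    (hA : ∀ i, ∀ x ∈ Xs i, A x ∈ Xs i)
    (ρ : ι → X →ₗ[F] X)
    (hρmem : ∀ i x, ρ i x ∈ Xs i)
    (hρsum : ∀ x, ∑ i, ρ i x = x)
    (hρproj : ∀ i j, ∀ x ∈ Xs j, ρ i x = if i = j then x else 0)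
    (g : X → ℝ) (hgnn : ∀ x, 0 ≤ g x) (hg0 : g 0 = 0)
    (hgadd : ∀ x, g x = ∑ i, g (ρ i x))
    (Es : ι → Submodule F U) (hEs : ∀ i, Es i = Submodule.comap B (Xs i))
    (hU : (⊤ : Submodule F U) = ⨆ i, Es i) :
    ∀ i k, ∀ x ∈ Xs i, JgoOn g A B (Es i) k x = JgoOn g A B Set.univ k x := by
  intro i k x hx
  refine le_antisymm ?_ (jgoOn_le_of_subset hgnn (Set.subset_univ _) ⟨0, (Es i).zero_mem⟩ k x)
  calc JgoOn g A B (Es i) k x = ∑ j, JgoOn g A B (Es j) k (ρ j x) :=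
        (sum_jgoOn_comp_eq_of_single hgnn hg0 (fun j => (Es j).zero_mem)
          (fun j => hρproj j i x hx) k).symm
    _ ≤ JgoOn g A B Set.univ k x :=
        sum_jgoOn_comp_le_jgoOn hgnn (fun j => ρ j) hgadd (fun j => (Es j : Set U))
          (exists_split_control hA hρmem hρsum hρproj (fun j => (hEs j).le) hU) k x

/-- under the decomposition hypotheses with `U = Σ_i E_i`, the cost-to-go
functions of the restricted subproblem on `X_i` with controls in `E_i` agree with the
cost-to-go functions of the full problem on `X_i`. -/
theorem restricted_costToGo_eq_costToGo
    {F U X : Type*} [Field F] [AddCommGroup U] [Module F U]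
    [AddCommGroup X] [Module F X] {ι : Type*} [Fintype ι] [DecidableEq ι]
    (A : X →ₗ[F] X) (B : U →ₗ[F] X) (Xs : ι → Submodule F X)
    (hXs : DirectSum.IsInternal Xs)
    (hA : ∀ i, ∀ x ∈ Xs i, A x ∈ Xs i)
    (ρ : ι → X →ₗ[F] X)
    (hρmem : ∀ i x, ρ i x ∈ Xs i)
    (hρsum : ∀ x, ∑ i, ρ i x = x)
    (hρproj : ∀ i j, ∀ x ∈ Xs j, ρ i x = if i = j then x else 0)
    (g : X → ℝ) (hgnn : ∀ x, 0 ≤ g x) (hg0 : g 0 = 0)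
    (hgadd : ∀ x, g x = ∑ i, g (ρ i x))
    (Es : ι → Submodule F U) (hEs : ∀ i, Es i = Submodule.comap B (Xs i))
    (hU : (⊤ : Submodule F U) = ⨆ i, Es i)
    (hatt : ∀ k (x : X), ∃ u : U, ∀ v : U,
      JgoOn g A B Set.univ k (A x + B u) ≤ JgoOn g A B Set.univ k (A x + B v))
    (hattE : ∀ i k (x : X), ∃ u ∈ Es i, ∀ v ∈ Es i,
      JgoOn g A B (Es i) k (A x + B u) ≤ JgoOn g A B (Es i) k (A x + B v)) :
    ∀ i k, ∀ x ∈ Xs i, JgoOn g A B (Es i) k x = JgoOn g A B Set.univ k x :=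
  restricted_costToGo_eq_costToGo_general A B Xs hA ρ hρmem hρsum hρproj g hgnn hg0 hgadd Es hEs hU
end

section
/- One-step decomposition of the minimization: let X = ⊕_{i∈I} X_i with A X_i ⊆ X_i, g : X → ℝ≥0 additive across the decomposition with g(0) = 0, B : U → X linear with E_i = B⁻¹(X_i) and U = Σ_i E_i. Then for every x ∈ X, min_{u∈U} g(Ax + Bu) = Σ_{i∈I} min_{u_i∈E_i} g(A ρ_i(x) + B u_i), provided all minima are attained. -/
/-!
Write `x = Σ ρ_i x` and `u = Σ u_i` with `u_i ∈ E_i`. Then `A x + B u = Σ (A ρ_i x + B u_i)` with the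
`i`-th summand in `X_i`, so additivity of `g` splits the cost `g (A x + B u)` into independent costs
`g (A ρ_i x + B u_i)`, one per block. Minimizing over `u` is therefore minimizing each block separately,
and the sum of blockwise minimizers is a global minimizer.
-/

open Finset

section Projections

variable {R M N : Type*} [Semiring R] [AddCommMonoid M] [Module R M] [AddCommMonoid N] [Module R N]
  {ι : Type*} [Fintype ι] [DecidableEq ι] {Xs : ι → Submodule R M} {ρ : ι → M →ₗ[R] M}

theorem proj_sum_of_mem (hρproj : ∀ i j, ∀ x ∈ Xs j, ρ i x = if i = j then x else 0)
    {y : ι → M} (hy : ∀ j, y j ∈ Xs j) (i : ι) : ρ i (∑ j, y j) = y i := by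
  simp [map_sum, hρproj i _ _ (hy _)]

theorem apply_add_map_sum_eq_sum_apply {A : M →ₗ[R] M} {B : N →ₗ[R] M}
    (hA : ∀ i, ∀ x ∈ Xs i, A x ∈ Xs i) (hρmem : ∀ i x, ρ i x ∈ Xs i)
    (hρsum : ∀ x, ∑ i, ρ i x = x)
    (hρproj : ∀ i j, ∀ x ∈ Xs j, ρ i x = if i = j then x else 0)
    (g : M → ℝ) (hgadd : ∀ x, g x = ∑ i, g (ρ i x))
    (x : M) {f : ι → N} (hf : ∀ i, B (f i) ∈ Xs i) :
    g (A x + B (∑ i, f i)) = ∑ i, g (A (ρ i x) + B (f i)) := by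
  have hsplit : A x + B (∑ i, f i) = ∑ i, (A (ρ i x) + B (f i)) := by
    conv_lhs => rw [← hρsum x]
    simp only [map_sum, sum_add_distrib]
  have hmem i : A (ρ i x) + B (f i) ∈ Xs i := add_mem (hA i _ (hρmem i x)) (hf i)
  rw [hgadd, hsplit]
  exact sum_congr rfl fun i _ ↦ by rw [proj_sum_of_mem hρproj hmem]

end Projections

section Decomposition

variable {R U : Type*} [Semiring R] [AddCommMonoid U] [Module R U]
  {ι : Type*} [Fintype ι] {Es : ι → Submodule R U}

theorem Submodule.exists_sum_eq_of_mem_iSup {u : U} (hu : u ∈ ⨆ i, Es i) :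
    ∃ f : ι → U, (∀ i, f i ∈ Es i) ∧ ∑ i, f i = u := by
  obtain ⟨f, hf, rfl⟩ := (Submodule.mem_iSup_iff_exists_finsupp Es u).mp hu
  exact ⟨f, hf, (Finsupp.sum_fintype f (fun _ xi ↦ xi) fun _ ↦ rfl).symm⟩

theorem isLeast_range_of_eq_sum (hU : (⊤ : Submodule R U) = ⨆ i, Es i)
    (φ : U → ℝ) (ψ : ι → U → ℝ)
    (hφ : ∀ f : ι → U, (∀ i, f i ∈ Es i) → φ (∑ i, f i) = ∑ i, ψ i (f i))
    {m : ι → ℝ} (hm : ∀ i, IsLeast (ψ i '' Es i) (m i)) :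
    IsLeast (Set.range φ) (∑ i, m i) := by
  choose w hw hwm using fun i ↦ (hm i).1
  refine ⟨⟨∑ i, w i, by rw [hφ w hw]; simp only [hwm]⟩, ?_⟩
  rintro _ ⟨u, rfl⟩
  obtain ⟨f, hf, rfl⟩ :=
    Submodule.exists_sum_eq_of_mem_iSup (hU ▸ Submodule.mem_top : u ∈ ⨆ i, Es i)
  rw [hφ f hf]
  exact sum_le_sum fun i _ ↦ (hm i).2 ⟨f i, hf i, rfl⟩

end Decomposition

theorem one_step_min_decomposition_general
    {F U X : Type*} [Field F] [AddCommGroup U] [Module F U]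
    [AddCommGroup X] [Module F X] {ι : Type*} [Fintype ι] [DecidableEq ι]
    (A : X →ₗ[F] X) (B : U →ₗ[F] X)
    (Xs : ι → Submodule F X)
    (hA : ∀ i, ∀ x ∈ Xs i, A x ∈ Xs i)
    (ρ : ι → X →ₗ[F] X)
    (hρmem : ∀ i x, ρ i x ∈ Xs i)
    (hρsum : ∀ x, ∑ i, ρ i x = x)
    (hρproj : ∀ i j, ∀ x ∈ Xs j, ρ i x = if i = j then x else 0)
    (g : X → ℝ)
    (hgadd : ∀ x, g x = ∑ i, g (ρ i x))
    (Es : ι → Submodule F U) (hEs : ∀ i, Es i = Submodule.comap B (Xs i))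
    (hU : (⊤ : Submodule F U) = ⨆ i, Es i)
    (hminE : ∀ i (x : X), ∃ u ∈ Es i, ∀ v ∈ Es i,
      g (A x + B u) ≤ g (A x + B v)) :
    ∀ x : X, sInf (Set.range fun u : U => g (A x + B u)) =
      ∑ i, sInf ((fun u : U => g (A (ρ i x) + B u)) '' (Es i : Set U)) := by
  intro x
  choose w hw hwmin using fun i ↦ hminE i (ρ i x)
  have hblock i : IsLeast ((fun u ↦ g (A (ρ i x) + B u)) '' Es i) (g (A (ρ i x) + B (w i))) :=
    ⟨⟨w i, hw i, rfl⟩, by rintro _ ⟨v, hv, rfl⟩; exact hwmin i v hv⟩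
  have hglobal := isLeast_range_of_eq_sum hU (fun u ↦ g (A x + B u)) _
    (fun f hf ↦ apply_add_map_sum_eq_sum_apply hA hρmem hρsum hρproj g hgadd x
      fun i ↦ Submodule.mem_comap.mp (hEs i ▸ hf i)) hblock
  rw [hglobal.csInf_eq]
  exact sum_congr rfl fun i _ ↦ (hblock i).csInf_eq.symm

/-- one-step decomposition of the minimization:
`min_{u ∈ U} g(Ax + Bu) = Σ_i min_{u_i ∈ E_i} g(A ρ_i x + B u_i)`. -/
theorem one_step_min_decomposition
    {F U X : Type*} [Field F] [AddCommGroup U] [Module F U]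
    [AddCommGroup X] [Module F X] {ι : Type*} [Fintype ι] [DecidableEq ι]
    (A : X →ₗ[F] X) (B : U →ₗ[F] X)
    (Xs : ι → Submodule F X) (hXs : DirectSum.IsInternal Xs)
    (hA : ∀ i, ∀ x ∈ Xs i, A x ∈ Xs i)
    (ρ : ι → X →ₗ[F] X)
    (hρmem : ∀ i x, ρ i x ∈ Xs i)
    (hρsum : ∀ x, ∑ i, ρ i x = x)
    (hρproj : ∀ i j, ∀ x ∈ Xs j, ρ i x = if i = j then x else 0)
    (g : X → ℝ) (hgnn : ∀ x, 0 ≤ g x) (hg0 : g 0 = 0)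
    (hgadd : ∀ x, g x = ∑ i, g (ρ i x))
    (Es : ι → Submodule F U) (hEs : ∀ i, Es i = Submodule.comap B (Xs i))
    (hU : (⊤ : Submodule F U) = ⨆ i, Es i)
    (hmin : ∀ x : X, ∃ u : U, ∀ v : U, g (A x + B u) ≤ g (A x + B v))
    (hminE : ∀ i (x : X), ∃ u ∈ Es i, ∀ v ∈ Es i,
      g (A x + B u) ≤ g (A x + B v)) :
    ∀ x : X, sInf (Set.range fun u : U => g (A x + B u)) =
      ∑ i, sInf ((fun u : U => g (A (ρ i x) + B u)) '' (Es i : Set U)) :=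
  one_step_min_decomposition_general A B Xs hA ρ hρmem hρsum hρproj g hgadd Es hEs hU hminE
end
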